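/- Suppose the margin assumption holds with y_* ∈ ℝ₊^d, the boundedness assumption holds, and the selection map satisfies v(y) ∈ ℝ₊^d whenever y ∈ ℝ₊^d. Let (y_t,b_t) be the classifiers generated by Algorithm 3 with cone 𝕃 = ℝ₊^d×ℝ and stepsize γ = 1 on a sequence of agents A_0,…,A_T ∈ 𝒜. Then Σ_{t∈M_T} L_hinge( (y_*/(d_*·‖y_*‖_*), b_*/(d_*·‖y_*‖_*)); (s(A_t,y_t,b_t),1), ℓ(A_t) ) ≤ 0, and |M_T| ≤ (‖y_*‖₂² + b_*²)·(D̃² + 1) / (‖y_*‖_*² · d_*²). -/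

import Mathlib

noncomputable section
open scoped Classical
open scoped RealInnerProductSpace

/-- Feature space: `ℝ^d` with the Euclidean (`ℓ₂`) norm as ambient norm. -/
abbrev E (d : ℕ) : Type := EuclideanSpace ℝ (Fin d)

/-- Sign function with the convention `sgn 0 = +1`. -/
def sgn (t : ℝ) : ℝ := if 0 ≤ t then 1 else -1

/-- Dual norm `‖y‖_* = max { ⟪y,x⟫ : ‖x‖ ≤ 1 }` of a (semi)norm `p`. -/
def dualNorm {d : ℕ} (p : Seminorm ℝ (E d)) (y : E d) : ℝ :=
  sSup ((fun x => ⟪y, x⟫) '' {x | p x ≤ 1})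

/-- Predicted label `p̂(x,y,b) = sgn(⟪y,x⟫ + b - 2‖y‖_*/c)`. -/
def pred {d : ℕ} (p : Seminorm ℝ (E d)) (c : ℝ) (x y : E d) (b : ℝ) : ℝ :=
  sgn (⟪y, x⟫ + b - 2 * dualNorm p y / c)

/-- Agent response `r(A,y,b)`. -/
def resp {d : ℕ} (p : Seminorm ℝ (E d)) (v : E d → E d) (c : ℝ)
    (A y : E d) (b : ℝ) : E d :=
  if y ≠ 0 ∧ 0 ≤ (⟪y, A⟫ + b) / dualNorm p y ∧ (⟪y, A⟫ + b) / dualNorm p y < 2 / c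
  then A + (2 / c - (⟪y, A⟫ + b) / dualNorm p y) • v y
  else A

/-- Proxy point `s(A,y,b)`. -/
def proxy {d : ℕ} (p : Seminorm ℝ (E d)) (v : E d → E d) (lbl : E d → ℝ) (c : ℝ)
    (A y : E d) (b : ℝ) : E d :=
  if y ≠ 0 ∧ 0 ≤ (⟪y, A⟫ + b) / dualNorm p y ∧ (⟪y, A⟫ + b) / dualNorm p y < 2 / c
      ∧ lbl A = -1
  then A - ((⟪y, A⟫ + b) / dualNorm p y) • v y
  else resp p v c A y b

/-- The constant `C = sup_y ‖v(y)‖₂`. -/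
def Cconst {d : ℕ} (v : E d → E d) : ℝ := sSup (Set.range fun y => ‖v y‖)

/-- Hinge loss `L_hinge((y,b); (x,1), λ) = max{0, 1 - λ(⟪y,x⟫ + b)}`. -/
def hinge {d : ℕ} (q : E d × ℝ) (x : E d) (lab : ℝ) : ℝ :=
  max 0 (1 - lab * (⟪q.1, x⟫ + q.2))

lemma semi_sum {d : ℕ} (p : Seminorm ℝ (E d)) (s : Finset (Fin d)) (f : Fin d → E d) :
    p (∑ i ∈ s, f i) ≤ ∑ i ∈ s, p (f i) := by
  classical
  induction s using Finset.induction with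
  | empty => simp
  | insert _ _ h ih =>
      rw [Finset.sum_insert h, Finset.sum_insert h]
      exact (map_add_le_add p _ _).trans (by linarith)

lemma abs_coord_le {d : ℕ} (x : E d) (i : Fin d) : |x i| ≤ ‖x‖ := by
  have h : ‖x‖ = Real.sqrt (∑ j, x j ^ 2) := by
    rw [EuclideanSpace.norm_eq]
    congr 1
    exact Finset.sum_congr rfl fun j _ => by rw [Real.norm_eq_abs, sq_abs]
  rw [h, ← Real.sqrt_sq_eq_abs]
  exact Real.sqrt_le_sqrt (Finset.single_le_sum (fun j _ => sq_nonneg (x j)) (Finset.mem_univ i))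

lemma p_upper {d : ℕ} (p : Seminorm ℝ (E d)) :
    ∃ K : ℝ, 0 < K ∧ ∀ x : E d, p x ≤ K * ‖x‖ := by
  refine ⟨(∑ i, p (EuclideanSpace.single i (1:ℝ))) + 1, ?_, ?_⟩
  · have : 0 ≤ ∑ i, p (EuclideanSpace.single i (1:ℝ)) :=
      Finset.sum_nonneg fun i _ => apply_nonneg p _
    linarith
  · intro x
    have hx : x = ∑ i, x i • EuclideanSpace.single i (1:ℝ) := by
      have := (EuclideanSpace.basisFun (Fin d) ℝ).sum_repr x
      simp [EuclideanSpace.basisFun_repr] at this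
      exact this.symm
    have h1 : p x ≤ ∑ i, p (x i • EuclideanSpace.single i (1:ℝ)) := by
      conv_lhs => rw [hx]
      exact semi_sum p _ _
    have h2 : ∀ i : Fin d, p (x i • EuclideanSpace.single i (1:ℝ)) ≤
        p (EuclideanSpace.single i (1:ℝ)) * ‖x‖ := fun i => by
      rw [map_smul_eq_mul, Real.norm_eq_abs]
      have := abs_coord_le x i
      nlinarith [apply_nonneg p (EuclideanSpace.single i (1:ℝ)), abs_nonneg (x i)]
    calc p x ≤ ∑ i, p (EuclideanSpace.single i (1:ℝ)) * ‖x‖ :=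
          h1.trans (Finset.sum_le_sum fun i _ => h2 i)
      _ = (∑ i, p (EuclideanSpace.single i (1:ℝ))) * ‖x‖ := by rw [Finset.sum_mul]
      _ ≤ _ := by nlinarith [norm_nonneg x]

lemma p_lower {d : ℕ} (hd : 1 ≤ d) (p : Seminorm ℝ (E d))
    (hpdef : ∀ x : E d, p x = 0 → x = 0) :
    ∃ ε : ℝ, 0 < ε ∧ ∀ x : E d, ε * ‖x‖ ≤ p x := by
  obtain ⟨K, hK, hKb⟩ := p_upper p
  have hcont : Continuous fun x : E d => p x := by
    have : LipschitzWith (Real.toNNReal K) fun x : E d => p x := by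
      apply LipschitzWith.of_dist_le_mul
      intro x y
      rw [Real.dist_eq, dist_eq_norm]
      have h1 : ‖p x - p y‖ ≤ p (x - y) := p.norm_sub_map_le_sub x y
      have h2 : p (x - y) ≤ K * ‖x - y‖ := hKb _
      rw [Real.norm_eq_abs] at h1
      rw [Real.coe_toNNReal K hK.le]
      linarith
    exact this.continuous
  haveI : Nontrivial (E d) := by
    refine ⟨0, EuclideanSpace.single ⟨0, hd⟩ 1, fun h => ?_⟩
    have := congrFun (congrArg (fun z : E d => (z : Fin d → ℝ)) h) ⟨0, hd⟩
    simp at this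
  have hsphne : (Metric.sphere (0 : E d) 1).Nonempty :=
    NormedSpace.sphere_nonempty.2 zero_le_one
  obtain ⟨x0, hx0, hmin⟩ := (isCompact_sphere (0 : E d) 1).exists_isMinOn hsphne
    hcont.continuousOn
  have hx0n : ‖x0‖ = 1 := by simpa using hx0
  have hx0ne : x0 ≠ 0 := fun h => by simp [h] at hx0n
  have hm : 0 < p x0 := by
    rcases (apply_nonneg p x0).lt_or_eq with h | h
    · exact h
    · exact absurd (hpdef x0 h.symm) hx0ne
  refine ⟨p x0, hm, fun x => ?_⟩
  rcases eq_or_ne x 0 with rfl | hx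
  · simp
  · have hxn : 0 < ‖x‖ := norm_pos_iff.2 hx
    have hmem : (‖x‖⁻¹ • x) ∈ Metric.sphere (0 : E d) 1 := by
      simp [norm_smul, abs_of_pos (inv_pos.2 hxn), inv_mul_cancel₀ hxn.ne']
    have := hmin hmem
    have heq : p (‖x‖⁻¹ • x) = ‖x‖⁻¹ * p x := by
      rw [map_smul_eq_mul, Real.norm_eq_abs, abs_of_pos (inv_pos.2 hxn)]
    simp only [IsMinOn, IsMinFilter] at hmin
    have h3 : p x0 ≤ ‖x‖⁻¹ * p x := heq ▸ this
    calc p x0 * ‖x‖ ≤ (‖x‖⁻¹ * p x) * ‖x‖ := by nlinarith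
      _ = p x := by field_simp

lemma dual_bddAbove {d : ℕ} (hd : 1 ≤ d) (p : Seminorm ℝ (E d))
    (hpdef : ∀ x : E d, p x = 0 → x = 0) (y : E d) :
    BddAbove ((fun x => ⟪y, x⟫) '' {x | p x ≤ 1}) := by
  obtain ⟨ε, hε, hεb⟩ := p_lower hd p hpdef
  refine ⟨‖y‖ * ε⁻¹, fun t ht => ?_⟩
  obtain ⟨x, hx, rfl⟩ := ht
  have h1 : ‖x‖ ≤ ε⁻¹ := by
    have h := (hεb x).trans (hx : p x ≤ 1)
    calc ‖x‖ = ε⁻¹ * (ε * ‖x‖) := by field_simp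
      _ ≤ ε⁻¹ * 1 := by have := (inv_pos.2 hε); nlinarith
      _ = ε⁻¹ := mul_one _
  calc ⟪y, x⟫ ≤ ‖y‖ * ‖x‖ := real_inner_le_norm y x
    _ ≤ ‖y‖ * ε⁻¹ := by nlinarith [norm_nonneg y]

lemma dualNorm_pos {d : ℕ} (hd : 1 ≤ d) (p : Seminorm ℝ (E d))
    (hpdef : ∀ x : E d, p x = 0 → x = 0) {y : E d} (hy : y ≠ 0) :
    0 < dualNorm p y := by
  obtain ⟨K, hK, hKb⟩ := p_upper p
  have hyn : 0 < ‖y‖ := norm_pos_iff.2 hy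
  set x := (K * ‖y‖)⁻¹ • y with hxdef
  have hpx : p x ≤ 1 := by
    rw [hxdef, map_smul_eq_mul, Real.norm_eq_abs, abs_of_pos (by positivity)]
    have := hKb y
    rw [inv_mul_le_iff₀ (by positivity)]
    linarith
  have hval : ⟪y, x⟫ = ‖y‖ / K := by
    rw [hxdef, real_inner_smul_right, real_inner_self_eq_norm_sq]
    field_simp
  have hle : ⟪y, x⟫ ≤ dualNorm p y :=
    le_csSup (dual_bddAbove hd p hpdef y) ⟨x, hpx, rfl⟩
  rw [hval] at hle
  have : 0 < ‖y‖ / K := by positivity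
  linarith

lemma dualNorm_zero {d : ℕ} (p : Seminorm ℝ (E d)) : dualNorm p (0 : E d) = 0 := by
  have h : ((fun x : E d => ⟪(0:E d), x⟫) '' {x | p x ≤ 1}) = {0} := by
    ext t
    simp only [Set.mem_image, Set.mem_setOf_eq, Set.mem_singleton_iff]
    constructor
    · rintro ⟨x, _, rfl⟩; simp
    · rintro rfl; exact ⟨0, by simp, by simp⟩
  rw [dualNorm, h, csSup_singleton]

lemma sgn_of_nonneg {t : ℝ} (h : 0 ≤ t) : sgn t = 1 := by rw [sgn, if_pos h]
lemma sgn_of_neg {t : ℝ} (h : t < 0) : sgn t = -1 := by rw [sgn, if_neg (not_le.2 h)]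

lemma inner_nonneg_orth {d : ℕ} {a b : E d} (ha : ∀ i, 0 ≤ a i) (hb : ∀ i, 0 ≤ b i) :
    0 ≤ ⟪a, b⟫ := by
  rw [PiLp.inner_apply]
  exact Finset.sum_nonneg fun i _ => by
    simpa [RCLike.inner_apply] using mul_nonneg (hb i) (ha i)

lemma proxy_margin {d : ℕ} (p : Seminorm ℝ (E d)) (c : ℝ)
    (v : E d → E d) (hvpos : ∀ y : E d, (∀ i, 0 ≤ y i) → ∀ i, 0 ≤ v y i)
    (lbl : E d → ℝ) (hlbl : ∀ A : E d, lbl A = 1 ∨ lbl A = -1)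
    (𝒜 : Set (E d)) (ystar : E d) (bstar dstar : ℝ)
    (hstarpos : ∀ i, 0 ≤ ystar i)
    (hsep : ∀ A ∈ 𝒜, dstar * dualNorm p ystar ≤ lbl A * (⟪ystar, A⟫ + bstar))
    {A y : E d} {b : ℝ} (hA : A ∈ 𝒜) (hy : ∀ i, 0 ≤ y i) :
    dstar * dualNorm p ystar ≤ lbl A * (⟪ystar, proxy p v lbl c A y b⟫ + bstar) := by
  set u := (⟪y, A⟫ + b) / dualNorm p y with hu
  have hiv : 0 ≤ ⟪ystar, v y⟫ := inner_nonneg_orth hstarpos (hvpos y hy)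
  have hAs := hsep A hA
  by_cases h1 : y ≠ 0 ∧ 0 ≤ u ∧ u < 2 / c ∧ lbl A = -1
  · rw [proxy, if_pos h1, inner_sub_right, real_inner_smul_right, h1.2.2.2]
    rw [h1.2.2.2] at hAs
    nlinarith [h1.2.1]
  · rw [proxy, if_neg h1, resp]
    by_cases h2 : y ≠ 0 ∧ 0 ≤ u ∧ u < 2 / c
    · have hl1 : lbl A = 1 := by
        rcases hlbl A with h | h
        · exact h
        · exact absurd ⟨h2.1, h2.2.1, h2.2.2, h⟩ h1
      rw [if_pos h2, inner_add_right, real_inner_smul_right, hl1]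
      rw [hl1] at hAs
      nlinarith [h2.2.2]
    · rw [if_neg h2]; exact hAs

lemma key_nonpos {d : ℕ} (hd : 1 ≤ d) (p : Seminorm ℝ (E d))
    (hpdef : ∀ x : E d, p x = 0 → x = 0) (c : ℝ) (hc : 0 < c)
    (v : E d → E d)
    (hv : ∀ y : E d, y ≠ 0 → p (v y) ≤ 1 ∧ ⟪y, v y⟫ = dualNorm p y)
    (lbl : E d → ℝ) (hlbl : ∀ A : E d, lbl A = 1 ∨ lbl A = -1)
    {A y : E d} {b : ℝ}
    (hmis : pred p c (resp p v c A y b) y b ≠ lbl A) :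
    lbl A * (⟪y, proxy p v lbl c A y b⟫ + b) ≤ 0 := by
  by_cases hy0 : y = 0
  · subst hy0
    have hre : resp p v c A 0 b = A := by rw [resp, if_neg (by simp)]
    have hpr : proxy p v lbl c A 0 b = A := by rw [proxy, if_neg (by simp), hre]
    rw [hpr, inner_zero_left]
    rw [hre, pred, inner_zero_left, dualNorm_zero] at hmis
    have h0 : (0:ℝ) + b - 2 * 0 / c = b := by ring
    rw [h0] at hmis
    rcases hlbl A with h | h <;> rw [h] at hmis ⊢
    · have hb : ¬ (0 ≤ b) := fun hb => hmis (sgn_of_nonneg hb)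
      push_neg at hb
      nlinarith
    · have hb : 0 ≤ b := by
        by_contra hb
        push_neg at hb
        exact hmis (sgn_of_neg hb)
      nlinarith
  · have hN : 0 < dualNorm p y := dualNorm_pos hd p hpdef hy0
    set N := dualNorm p y with hNdef
    set u := (⟪y, A⟫ + b) / N with hu
    have huN : ⟪y, A⟫ + b = u * N := by rw [hu, div_mul_cancel₀ _ hN.ne']
    have hyv : ⟪y, v y⟫ = N := (hv y hy0).2
    by_cases hQ : 0 ≤ u ∧ u < 2 / c
    · have hre : resp p v c A y b = A + (2/c - u) • v y := by
        rw [resp, if_pos ⟨hy0, hQ.1, hQ.2⟩]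
      have harg : ⟪y, resp p v c A y b⟫ + b - 2 * N / c = 0 := by
        rw [hre, inner_add_right, real_inner_smul_right, hyv]
        have hyA : ⟪y, A⟫ = u * N - b := by linarith
        rw [hyA]
        ring
      have hpred : pred p c (resp p v c A y b) y b = 1 := by
        rw [pred, ← hNdef, harg]
        exact sgn_of_nonneg le_rfl
      have hlm : lbl A = -1 := by
        rcases hlbl A with h | h
        · exact absurd (hpred.trans h.symm) hmis
        · exact h
      have hpr : proxy p v lbl c A y b = A - u • v y := by
        rw [proxy, if_pos ⟨hy0, hQ.1, hQ.2, hlm⟩]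
      rw [hpr, inner_sub_right, real_inner_smul_right, hyv, hlm]
      nlinarith
    · have hre : resp p v c A y b = A := by
        rw [resp, if_neg (fun h => hQ ⟨h.2.1, h.2.2⟩)]
      have hpr : proxy p v lbl c A y b = A := by
        rw [proxy, if_neg (fun h => hQ ⟨h.2.1, h.2.2.1⟩), hre]
      rw [hpr]
      rw [hre, pred, ← hNdef] at hmis
      rcases not_and_or.1 hQ with h | h
      · push_neg at h
        have harg : ⟪y, A⟫ + b - 2 * N / c < 0 := by
          rw [huN]
          have : 0 < 2 * N / c := by positivity
          nlinarith
        have hpred : sgn (⟪y, A⟫ + b - 2 * N / c) = -1 := sgn_of_neg harg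
        have hlm : lbl A = 1 := by
          rcases hlbl A with h' | h'
          · exact h'
          · exact absurd (hpred.trans h'.symm) hmis
        rw [hlm, huN]
        nlinarith
      · push_neg at h
        have h2c : 0 < 2 / c := by positivity
        have hu0 : 0 < u := lt_of_lt_of_le h2c h
        have harg : 0 ≤ ⟪y, A⟫ + b - 2 * N / c := by
          rw [huN]
          have : 2 * N / c = (2 / c) * N := by ring
          nlinarith
        have hpred : sgn (⟪y, A⟫ + b - 2 * N / c) = 1 := sgn_of_nonneg harg
        have hlm : lbl A = -1 := by
          rcases hlbl A with h' | h'
          · exact absurd (hpred.trans h'.symm) hmis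
          · exact h'
        rw [hlm, huN]
        nlinarith

lemma proxy_norm_le {d : ℕ} (p : Seminorm ℝ (E d)) (c : ℝ) (hc : 0 < c)
    (v : E d → E d) (hv0 : v 0 = 0) (lbl : E d → ℝ)
    (hCbdd : BddAbove (Set.range fun y => ‖v y‖)) (A y : E d) (b : ℝ) :
    ‖proxy p v lbl c A y b‖ ≤ ‖A‖ + 2 / c * Cconst v := by
  have hvy : ∀ z : E d, ‖v z‖ ≤ Cconst v := fun z => le_csSup hCbdd ⟨z, rfl⟩
  have hC0 : 0 ≤ Cconst v := le_trans (by simp [hv0]) (hvy 0)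
  set u := (⟪y, A⟫ + b) / dualNorm p y with hu
  by_cases h1 : y ≠ 0 ∧ 0 ≤ u ∧ u < 2 / c ∧ lbl A = -1
  · rw [proxy, if_pos h1]
    calc ‖A - u • v y‖ ≤ ‖A‖ + ‖u • v y‖ := norm_sub_le _ _
      _ = ‖A‖ + |u| * ‖v y‖ := by rw [norm_smul, Real.norm_eq_abs]
      _ ≤ ‖A‖ + 2 / c * Cconst v := by
          have h2 := hvy y
          have : |u| = u := abs_of_nonneg h1.2.1
          nlinarith [norm_nonneg (v y), h1.2.2.1]
  · rw [proxy, if_neg h1, resp]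
    by_cases h2 : y ≠ 0 ∧ 0 ≤ u ∧ u < 2 / c
    · rw [if_pos h2]
      calc ‖A + (2/c - u) • v y‖ ≤ ‖A‖ + ‖(2/c - u) • v y‖ := norm_add_le _ _
        _ = ‖A‖ + |2/c - u| * ‖v y‖ := by rw [norm_smul, Real.norm_eq_abs]
        _ ≤ ‖A‖ + 2 / c * Cconst v := by
            have h3 := hvy y
            have : |2/c - u| ≤ 2/c := by
              rw [abs_le]; constructor <;> nlinarith [h2.2.1, h2.2.2]
            nlinarith [norm_nonneg (v y), abs_nonneg (2/c - u)]
    · rw [if_neg h2]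
      have : 0 ≤ 2 / c * Cconst v := by positivity
      linarith

lemma proj_contract {d : ℕ} (m1 x1 z1 : E d) (m2 x2 z2 : ℝ)
    (hm : ∀ i, 0 ≤ m1 i) (hz : ∀ i, 0 ≤ z1 i)
    (hmin : ∀ q : E d × ℝ, (∀ i, 0 ≤ q.1 i) →
      ‖m1 - x1‖ ^ 2 + (m2 - x2) ^ 2 ≤ ‖q.1 - x1‖ ^ 2 + (q.2 - x2) ^ 2) :
    ‖m1 - z1‖ ^ 2 + (m2 - z2) ^ 2 ≤ ‖x1 - z1‖ ^ 2 + (x2 - z2) ^ 2 := by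
  set w1 : E d := z1 - m1 with hw1
  set w2 : ℝ := z2 - m2 with hw2
  set I : ℝ := ⟪m1 - x1, w1⟫ + (m2 - x2) * w2 with hI
  set Nw : ℝ := ‖w1‖ ^ 2 + w2 ^ 2 with hNw
  have step : ∀ θ : ℝ, 0 < θ → θ ≤ 1 → 0 ≤ 2 * θ * I + θ ^ 2 * Nw := by
    intro θ hθ0 hθ1
    have hq : ∀ i, 0 ≤ (m1 + θ • w1) i := by
      intro i
      have : (m1 + θ • w1) i = m1 i + θ * (z1 i - m1 i) := by
        simp [hw1, PiLp.add_apply, PiLp.smul_apply, PiLp.sub_apply, smul_eq_mul]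
      rw [this]
      nlinarith [hm i, hz i]
    have h := hmin (m1 + θ • w1, m2 + θ * w2) hq
    have hexp : ‖m1 + θ • w1 - x1‖ ^ 2 =
        ‖m1 - x1‖ ^ 2 + 2 * θ * ⟪m1 - x1, w1⟫ + θ ^ 2 * ‖w1‖ ^ 2 := by
      have : m1 + θ • w1 - x1 = (m1 - x1) + θ • w1 := by abel
      rw [this, norm_add_sq_real, real_inner_smul_right, norm_smul, Real.norm_eq_abs,
        mul_pow, sq_abs]
      ring
    simp only [hexp] at h
    nlinarith [h]
  have hI0 : 0 ≤ I := by
    by_contra hneg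
    push_neg at hneg
    have h1 := step 1 one_pos le_rfl
    have hNwpos : 0 < Nw := by nlinarith
    have hθ : 0 < -I / Nw := div_pos (by linarith) hNwpos
    have hθ1 : -I / Nw ≤ 1 := by
      rw [div_le_one hNwpos]; nlinarith
    have h2 := step (-I / Nw) hθ hθ1
    have : (-I / Nw) * Nw = -I := by field_simp
    nlinarith [sq_nonneg (-I / Nw)]
  have key : ‖x1 - z1‖ ^ 2 = ‖x1 - m1‖ ^ 2 + ‖m1 - z1‖ ^ 2 + 2 * ⟪x1 - m1, m1 - z1⟫ := by
    have hx : x1 - z1 = (x1 - m1) + (m1 - z1) := by abel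
    rw [hx, norm_add_sq_real]
    ring
  have hinner : ⟪x1 - m1, m1 - z1⟫ = ⟪m1 - x1, w1⟫ := by
    rw [show x1 - m1 = -(m1 - x1) by abel, show m1 - z1 = -w1 by rw [hw1]; abel,
      inner_neg_neg]
  have sc : (x2 - z2) ^ 2 = (x2 - m2) ^ 2 + (m2 - z2) ^ 2 + 2 * ((m2 - x2) * w2) := by
    rw [hw2]; ring
  have hm1z : ‖m1 - z1‖ ^ 2 = ‖w1‖ ^ 2 := by
    rw [show m1 - z1 = -w1 by rw [hw1]; abel, norm_neg]
  linarith [key, hinner, sc, hI0, sq_nonneg (x2 - m2), sq_nonneg ‖x1 - m1‖]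

/-- Theorem `nonnegative-perceptron-mistake-bound`: if
`y_* ∈ ℝ₊^d`, the selection map preserves `ℝ₊^d`, and the margin and boundedness
assumptions hold, then the strategic perceptron projected onto `𝕃 = ℝ₊^d × ℝ`
with `γ = 1` has nonpositive hinge loss against `(y_*,b_*)/(d_*‖y_*‖_*)` and makes
at most `(‖y_*‖₂² + b_*²)(D̃² + 1)/(‖y_*‖_*² d_*²)` mistakes. -/
theorem alg3_mistake_bound_nonneg_cone
    {d : ℕ} (hd : 1 ≤ d)
    (p : Seminorm ℝ (E d)) (hpdef : ∀ x : E d, p x = 0 → x = 0)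
    (c : ℝ) (hc : 0 < c)
    (v : E d → E d) (hv0 : v 0 = 0)
    (hv : ∀ y : E d, y ≠ 0 → p (v y) ≤ 1 ∧ ⟪y, v y⟫ = dualNorm p y)
    -- the selection map maps the nonnegative orthant into itself
    (hvpos : ∀ y : E d, (∀ i, 0 ≤ y i) → ∀ i, 0 ≤ v y i)
    (lbl : E d → ℝ) (hlbl : ∀ A : E d, lbl A = 1 ∨ lbl A = -1)
    (𝒜 : Set (E d))
    -- margin assumption, with `y_*` in the nonnegative orthant
    (ystar : E d) (bstar dstar : ℝ)
    (hystar : ystar ≠ 0) (hstarpos : ∀ i, 0 ≤ ystar i) (hdstar : 0 < dstar)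
    (hsep : ∀ A ∈ 𝒜, dstar * dualNorm p ystar ≤ lbl A * (⟪ystar, A⟫ + bstar))
    (hmax : ∀ (y : E d) (b t : ℝ), y ≠ 0 →
      (∀ A ∈ 𝒜, t * dualNorm p y ≤ lbl A * (⟪y, A⟫ + b)) → t ≤ dstar)
    -- boundedness assumption
    (hbdd : ∃ D : ℝ, ∀ A ∈ 𝒜, ‖A‖ ≤ D)
    (hCbdd : BddAbove (Set.range fun y => ‖v y‖))
    -- Algorithm 3 with cone `𝕃 = ℝ₊^d × ℝ` and stepsize `γ = 1`
    (T : ℕ) (Ag : ℕ → E d) (hAg : ∀ t, Ag t ∈ 𝒜)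
    (ys : ℕ → E d) (bs : ℕ → ℝ)
    (hinit : ys 0 = 0 ∧ bs 0 = 0)
    (hupd : ∀ t : ℕ,
      (pred p c (resp p v c (Ag t) (ys t) (bs t)) (ys t) (bs t) ≠ lbl (Ag t) →
        (∀ i, 0 ≤ ys (t + 1) i) ∧
        (∀ q : E d × ℝ, (∀ i, 0 ≤ q.1 i) →
          ‖ys (t + 1) - (ys t + lbl (Ag t) • proxy p v lbl c (Ag t) (ys t) (bs t))‖ ^ 2 +
            (bs (t + 1) - (bs t + lbl (Ag t))) ^ 2 ≤
          ‖q.1 - (ys t + lbl (Ag t) • proxy p v lbl c (Ag t) (ys t) (bs t))‖ ^ 2 +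
            (q.2 - (bs t + lbl (Ag t))) ^ 2)) ∧
      (pred p c (resp p v c (Ag t) (ys t) (bs t)) (ys t) (bs t) = lbl (Ag t) →
        ys (t + 1) = ys t ∧ bs (t + 1) = bs t)) :
    ∀ M : Finset ℕ,
      M = (Finset.range (T + 1)).filter (fun t =>
        pred p c (resp p v c (Ag t) (ys t) (bs t)) (ys t) (bs t) ≠ lbl (Ag t)) →
    ∀ Dtil : ℝ, Dtil = sSup ((fun A => ‖A‖) '' 𝒜) + 2 * Cconst v / c →
      (∑ t ∈ M, hinge ((dstar * dualNorm p ystar)⁻¹ • ystar,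
            bstar / (dstar * dualNorm p ystar))
          (proxy p v lbl c (Ag t) (ys t) (bs t)) (lbl (Ag t)) ≤ 0) ∧
      (M.card : ℝ) ≤
        (‖ystar‖ ^ 2 + bstar ^ 2) * (Dtil ^ 2 + 1) /
          ((dualNorm p ystar) ^ 2 * dstar ^ 2) := by
  intro M hM Dtil hDtil
  -- basic setup
  obtain ⟨D0, hD0⟩ := hbdd
  have hAne : 𝒜.Nonempty := ⟨Ag 0, hAg 0⟩
  have hDbdd : BddAbove ((fun A : E d => ‖A‖) '' 𝒜) :=
    ⟨D0, by rintro t ⟨A, hA, rfl⟩; exact hD0 A hA⟩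
  have hDle : ∀ A ∈ 𝒜, ‖A‖ ≤ sSup ((fun A : E d => ‖A‖) '' 𝒜) :=
    fun A hA => le_csSup hDbdd ⟨A, hA, rfl⟩
  have hN : 0 < dualNorm p ystar := dualNorm_pos hd p hpdef hystar
  set S : ℝ := dstar * dualNorm p ystar with hSdef
  have hSpos : 0 < S := mul_pos hdstar hN
  -- positivity of the iterates
  have hypos : ∀ t, ∀ i, 0 ≤ ys t i := by
    intro t
    induction t with
    | zero => intro i; rw [hinit.1]; simp
    | succ n ih =>
        by_cases hmist : pred p c (resp p v c (Ag n) (ys n) (bs n)) (ys n) (bs n) = lbl (Ag n)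
        · rw [((hupd n).2 hmist).1]; exact ih
        · exact ((hupd n).1 hmist).1
  -- norm bound on the proxy points
  have hsnorm : ∀ t, ‖proxy p v lbl c (Ag t) (ys t) (bs t)‖ ≤ Dtil := by
    intro t
    refine (proxy_norm_le p c hc v hv0 lbl hCbdd (Ag t) (ys t) (bs t)).trans ?_
    rw [hDtil]
    have h1 := hDle (Ag t) (hAg t)
    have h2 : 2 / c * Cconst v = 2 * Cconst v / c := by ring
    linarith
  have hDtil0 : 0 ≤ Dtil := le_trans (norm_nonneg _) (hsnorm 0)
  -- margin of the scaled optimal classifier on proxy points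
  have hmarg : ∀ t, (1:ℝ) ≤ lbl (Ag t) *
      (⟪(S⁻¹ • ystar : E d), proxy p v lbl c (Ag t) (ys t) (bs t)⟫ + bstar / S) := by
    intro t
    have hm0 := proxy_margin p c v hvpos lbl hlbl 𝒜 ystar bstar dstar hstarpos hsep
      (hAg t) (hypos t) (b := bs t) (y := ys t)
    rw [← hSdef] at hm0
    rw [real_inner_smul_left]
    have heq : lbl (Ag t) * (S⁻¹ * ⟪ystar, proxy p v lbl c (Ag t) (ys t) (bs t)⟫ + bstar / S)
        = S⁻¹ * (lbl (Ag t) * (⟪ystar, proxy p v lbl c (Ag t) (ys t) (bs t)⟫ + bstar)) := by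
      field_simp
      try ring
    rw [heq]
    calc (1:ℝ) = S⁻¹ * S := (inv_mul_cancel₀ hSpos.ne').symm
      _ ≤ _ := mul_le_mul_of_nonneg_left hm0 (inv_nonneg.2 hSpos.le)
  constructor
  · -- hinge losses vanish
    refine Finset.sum_nonpos fun t ht => ?_
    have h1 := hmarg t
    simp only [hinge]
    apply max_le le_rfl
    linarith
  · -- mistake bound
    set R2 : ℝ := Dtil ^ 2 + 1 with hR2def
    have hR2pos : (0:ℝ) < R2 := by positivity
    set z1 : E d := (R2 * S⁻¹) • ystar with hz1def
    set z2 : ℝ := R2 * (bstar / S) with hz2def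
    have hz1pos : ∀ i, 0 ≤ z1 i := by
      intro i
      have : z1 i = (R2 * S⁻¹) * ystar i := by
        rw [hz1def]; simp [PiLp.smul_apply, smul_eq_mul]
      rw [this]
      have : 0 ≤ R2 * S⁻¹ := by positivity
      exact mul_nonneg this (hstarpos i)
    have claim : ∀ n : ℕ, ‖ys n - z1‖ ^ 2 + (bs n - z2) ^ 2
        + R2 * (((Finset.range n).filter (fun t =>
        pred p c (resp p v c (Ag t) (ys t) (bs t)) (ys t) (bs t) ≠ lbl (Ag t))).card : ℝ)
        ≤ ‖ys 0 - z1‖ ^ 2 + (bs 0 - z2) ^ 2 := by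
      intro n
      induction n with
      | zero => simp
      | succ n ih =>
          by_cases hm : pred p c (resp p v c (Ag n) (ys n) (bs n)) (ys n) (bs n) = lbl (Ag n)
          · have hys : ys (n+1) = ys n := ((hupd n).2 hm).1
            have hbs : bs (n+1) = bs n := ((hupd n).2 hm).2
            have hcnt : ((Finset.range (n+1)).filter (fun t =>
                pred p c (resp p v c (Ag t) (ys t) (bs t)) (ys t) (bs t) ≠ lbl (Ag t))).card
                = ((Finset.range n).filter (fun t =>
                pred p c (resp p v c (Ag t) (ys t) (bs t)) (ys t) (bs t) ≠ lbl (Ag t))).card := by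
              rw [Finset.range_add_one, Finset.filter_insert, if_neg (not_not_intro hm)]
            rw [hcnt, hys, hbs]
            exact ih
          · -- a mistake step
            set s : E d := proxy p v lbl c (Ag n) (ys n) (bs n) with hs
            set l : ℝ := lbl (Ag n) with hl
            have hl2 : l ^ 2 = 1 := by
              rcases hlbl (Ag n) with h | h <;> rw [hl, h] <;> norm_num
            have hkey : l * (⟪ys n, s⟫ + bs n) ≤ 0 :=
              key_nonpos hd p hpdef c hc v hv lbl hlbl hm
            have hmrg := hmarg n
            rw [real_inner_smul_left] at hmrg
            have hproj : ‖ys (n+1) - z1‖ ^ 2 + (bs (n+1) - z2) ^ 2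
                ≤ ‖(ys n + l • s) - z1‖ ^ 2 + ((bs n + l) - z2) ^ 2 :=
              proj_contract (ys (n+1)) (ys n + l • s) z1 (bs (n+1)) (bs n + l) z2
                ((hupd n).1 hm).1 hz1pos ((hupd n).1 hm).2
            have heq1 : ‖(ys n + l • s) - z1‖ ^ 2 =
                ‖ys n - z1‖ ^ 2 + 2 * (l * ⟪ys n, s⟫) - 2 * (R2 * (l * (S⁻¹ * ⟪ystar, s⟫)))
                  + l ^ 2 * ‖s‖ ^ 2 := by
              have hre : (ys n + l • s) - z1 = (ys n - z1) + l • s := by abel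
              rw [hre, norm_add_sq_real, real_inner_smul_right, norm_smul, Real.norm_eq_abs,
                mul_pow, sq_abs, inner_sub_left, hz1def, real_inner_smul_left]
              ring
            have heq2 : ((bs n + l) - z2) ^ 2 =
                (bs n - z2) ^ 2 + 2 * (l * bs n) - 2 * (R2 * (l * (bstar / S))) + l ^ 2 := by
              rw [hz2def]; ring
            have hs2 : ‖s‖ ^ 2 ≤ Dtil ^ 2 :=
              pow_le_pow_left₀ (norm_nonneg s) (hsnorm n) 2
            have hsum2 : l ^ 2 * ‖s‖ ^ 2 + l ^ 2 = ‖s‖ ^ 2 + 1 := by rw [hl2]; ring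
            have h5 : 2 * R2 * 1 ≤ 2 * R2 * (l * (S⁻¹ * ⟪ystar, s⟫ + bstar / S)) :=
              mul_le_mul_of_nonneg_left hmrg (by positivity)
            have hstep : ‖ys (n+1) - z1‖ ^ 2 + (bs (n+1) - z2) ^ 2
                ≤ ‖ys n - z1‖ ^ 2 + (bs n - z2) ^ 2 - R2 := by
              have hR2eq : R2 = Dtil ^ 2 + 1 := hR2def
              linarith only [hproj, heq1, heq2, hkey, h5, hs2, hsum2, hR2eq]
            have hcnt : (((Finset.range (n+1)).filter (fun t =>
                pred p c (resp p v c (Ag t) (ys t) (bs t)) (ys t) (bs t) ≠ lbl (Ag t))).card : ℝ)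
                = (((Finset.range n).filter (fun t =>
                pred p c (resp p v c (Ag t) (ys t) (bs t)) (ys t) (bs t) ≠ lbl (Ag t))).card : ℝ)
                  + 1 := by
              rw [Finset.range_add_one, Finset.filter_insert, if_pos hm,
                Finset.card_insert_of_notMem (by simp)]
              push_cast
              ring
            rw [hcnt]
            linarith only [ih, hstep]
    -- conclude
    have hclaim := claim (T + 1)
    rw [← hM] at hclaim
    have hPhi0 : ‖ys 0 - z1‖ ^ 2 + (bs 0 - z2) ^ 2
        = R2 ^ 2 * ((‖ystar‖ ^ 2 + bstar ^ 2) / S ^ 2) := by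
      simp only [hinit.1, hinit.2, zero_sub, norm_neg, neg_sq]
      rw [hz1def, hz2def, norm_smul, Real.norm_eq_abs, mul_pow, sq_abs]
      field_simp
    have hPhiT : 0 ≤ ‖ys (T + 1) - z1‖ ^ 2 + (bs (T + 1) - z2) ^ 2 := by positivity
    have hub : R2 * (M.card : ℝ) ≤ R2 * (R2 * ((‖ystar‖ ^ 2 + bstar ^ 2) / S ^ 2)) := by
      rw [hPhi0] at hclaim
      have hring : R2 ^ 2 * ((‖ystar‖ ^ 2 + bstar ^ 2) / S ^ 2)
          = R2 * (R2 * ((‖ystar‖ ^ 2 + bstar ^ 2) / S ^ 2)) := by ring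
      linarith only [hclaim, hPhiT, hring]
    have hcard : (M.card : ℝ) ≤ R2 * ((‖ystar‖ ^ 2 + bstar ^ 2) / S ^ 2) :=
      le_of_mul_le_mul_left hub hR2pos
    have hgoal : R2 * ((‖ystar‖ ^ 2 + bstar ^ 2) / S ^ 2) =
        (‖ystar‖ ^ 2 + bstar ^ 2) * (Dtil ^ 2 + 1) / ((dualNorm p ystar) ^ 2 * dstar ^ 2) := by
      rw [hR2def, hSdef]
      field_simp
    rw [hgoal] at hcard
    exact hcard
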